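/- Let G be a loopless directed multigraph on vertices {1,...,n} with edges numbered 1,...,k. Then the coefficient of G in Δ(𝓑_{n,k}(q,y,z)) equals [B_G]_k(q, y−1, z−1). Here Δ = B₁···B_k is the Laplace operator, where B_i leaves a graph unchanged if its i-th edge (a,b) has a≠b, and sends it to −Σ_{m≠a} (graph with i-th edge replaced by (a,m)) if the i-th edge is the loop (a,a); 𝓑_{n,k}(q,y,z) = Σ_{G ∈ Γ_{n,k}} B_G(q,y,z)·G in the free module spanned by all directed multigraphs with n numbered vertices and k numbered edges. -/

import Mathlib

open Finset

/-- Bernardi polynomial of `G` at `q` colors, in variables `y = X 0`, `z = X 1`. -/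
noncomputable def Bpoly (n k q : ℕ) (G : Fin k → Fin n × Fin n) :
    MvPolynomial (Fin 2) ℚ :=
  ∑ f : Fin n → Fin q,
    MvPolynomial.X 0 ^ (univ.filter fun i => f (G i).1 < f (G i).2).card *
    MvPolynomial.X 1 ^ (univ.filter fun i => f (G i).2 < f (G i).1).card

/-- Truncation `[P]_m`: keep only monomials of total degree `m` in `y,z`. -/
noncomputable def trunc (m : ℕ) (P : MvPolynomial (Fin 2) ℚ) : MvPolynomial (Fin 2) ℚ :=
  ∑ d ∈ P.support.filter fun d => d 0 + d 1 = m, MvPolynomial.monomial d (P.coeff d)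

/-- Coefficient of `G` in `B_i H`: the operator `B_i` fixes `H` if its `i`-th
edge is not a loop, and sends `H` with `i`-th edge the loop `(a,a)` to
`-∑_{m ≠ a}` (`H` with `i`-th edge replaced by `(a,m)`). -/
def bcoeff (n k : ℕ) (i : Fin k) (H G : Fin k → Fin n × Fin n) : ℤ :=
  if (H i).1 = (H i).2 then
    (if (∀ j, j ≠ i → G j = H j) ∧ (G i).1 = (H i).1 ∧ (G i).1 ≠ (G i).2 then -1 else 0)
  else (if G = H then 1 else 0)

/-- The operator `B_i`, extended linearly to the free module on `Γ_{n,k}`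
(realized as `R`-valued coefficient functions on `Γ_{n,k}`). -/
noncomputable def Bop {R : Type*} [CommRing R] (n k : ℕ) (i : Fin k)
    (x : (Fin k → Fin n × Fin n) → R) : (Fin k → Fin n × Fin n) → R :=
  fun G => ∑ H : Fin k → Fin n × Fin n, bcoeff n k i H G • x H

/-- The Laplace operator `Δ = B₁ ⋯ B_k`. -/
noncomputable def Delta {R : Type*} [CommRing R] (n k : ℕ) :
    ((Fin k → Fin n × Fin n) → R) → ((Fin k → Fin n × Fin n) → R) :=
  (List.finRange k).foldr (fun i F => Bop n k i ∘ F) id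

namespace Stmt9Aux

open MvPolynomial

variable {R : Type*} [CommRing R]

/-- Replace the edges in `S` by loops at their sources. -/
def modG {n k : ℕ} (G : Fin k → Fin n × Fin n) (S : Finset (Fin k)) :
    Fin k → Fin n × Fin n :=
  fun i => if i ∈ S then ((G i).1, (G i).1) else G i

lemma modG_empty {n k : ℕ} (G : Fin k → Fin n × Fin n) : modG G ∅ = G := by
  funext i; simp [modG]

lemma bcoeff_eq {n k : ℕ} (i : Fin k) (H G : Fin k → Fin n × Fin n)
    (h : (G i).1 ≠ (G i).2) :
    bcoeff n k i H G =
      (if H = G then 1 else 0)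
        - (if H = Function.update G i ((G i).1, (G i).1) then 1 else 0) := by
  unfold bcoeff
  by_cases hH : (H i).1 = (H i).2
  · have hne : H ≠ G := by
      intro e; subst e; exact h hH
    rw [if_pos hH, if_neg hne, zero_sub]
    by_cases hU : H = Function.update G i ((G i).1, (G i).1)
    · rw [if_pos hU, if_pos]
      refine ⟨fun j hj => ?_, ?_, h⟩
      · rw [hU, Function.update_of_ne hj]
      · rw [hU, Function.update_self]
    · rw [if_neg hU, if_neg, neg_zero]
      rintro ⟨h1, h2, -⟩
      apply hU
      funext j
      by_cases hj : j = i
      · subst hj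
        rw [Function.update_self]
        have hHj : H j = ((H j).1, (H j).2) := rfl
        rw [hHj, ← hH, ← h2]
      · rw [Function.update_of_ne hj, ← h1 j hj]
  · have hU : H ≠ Function.update G i ((G i).1, (G i).1) := by
      intro e
      apply hH
      rw [e, Function.update_self]
    rw [if_neg hH, if_neg hU, sub_zero]
    by_cases hGH : G = H
    · rw [if_pos hGH, if_pos hGH.symm]
    · rw [if_neg hGH, if_neg (fun e => hGH e.symm)]

lemma Bop_eval (n k : ℕ) (i : Fin k) (y : (Fin k → Fin n × Fin n) → R)
    (G : Fin k → Fin n × Fin n) (h : (G i).1 ≠ (G i).2) :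
    Bop n k i y G = y G - y (Function.update G i ((G i).1, (G i).1)) := by
  unfold Bop
  rw [Finset.sum_congr rfl (fun H _ => by rw [bcoeff_eq i H G h])]
  simp only [sub_smul, ite_smul, one_smul, zero_smul]
  rw [Finset.sum_sub_distrib,
    Finset.sum_ite_eq' univ G y,
    Finset.sum_ite_eq' univ (Function.update G i ((G i).1, (G i).1)) y]
  simp

lemma foldr_expand (n k : ℕ) (x : (Fin k → Fin n × Fin n) → R) (L : List (Fin k)) :
    L.Nodup → ∀ G : Fin k → Fin n × Fin n, (∀ i ∈ L, (G i).1 ≠ (G i).2) →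
    (List.foldr (fun i F => Bop n k i ∘ F) id L) x G =
      ∑ S ∈ L.toFinset.powerset, (-1 : ℤ) ^ S.card • x (modG G S) := by
  induction L with
  | nil =>
    intro _ G _
    simp [modG_empty]
  | cons i L ih =>
    intro hnd G hG
    obtain ⟨hiL, hndL⟩ := List.nodup_cons.mp hnd
    have hloop : (G i).1 ≠ (G i).2 := hG i List.mem_cons_self
    have hfold : (List.foldr (fun i F => Bop n k i ∘ F) id (i :: L)) x G
        = Bop n k i ((List.foldr (fun i F => Bop n k i ∘ F) id L) x) G := rfl
    rw [hfold, Bop_eval n k i _ G hloop]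
    set G' := Function.update G i ((G i).1, (G i).1) with hG'def
    have hGL : ∀ j ∈ L, (G j).1 ≠ (G j).2 := fun j hj => hG j (List.mem_cons_of_mem i hj)
    have hG'L : ∀ j ∈ L, (G' j).1 ≠ (G' j).2 := by
      intro j hj
      have hji : j ≠ i := fun e => hiL (e ▸ hj)
      rw [hG'def, Function.update_of_ne hji]
      exact hGL j hj
    rw [ih hndL G hGL, ih hndL G' hG'L]
    have hit : i ∉ L.toFinset := by simpa using hiL
    rw [List.toFinset_cons, Finset.sum_powerset_insert hit]
    rw [sub_eq_add_neg, ← Finset.sum_neg_distrib]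
    congr 1
    apply Finset.sum_congr rfl
    intro S hS
    have hiS : i ∉ S := fun hmem => hit (Finset.mem_powerset.mp hS hmem)
    have hmod : modG G' S = modG G (insert i S) := by
      funext j
      by_cases hjS : j ∈ S
      · have hji : j ≠ i := fun e => hiS (e ▸ hjS)
        simp [modG, hjS, hG'def, Function.update_of_ne hji]
      · by_cases hji : j = i
        · subst hji
          simp [modG, hjS, hG'def]
        · simp [modG, hjS, hji, hG'def, Function.update_of_ne hji]
    rw [hmod, Finset.card_insert_of_notMem hiS, pow_succ, mul_smul, smul_smul]
    rw [mul_neg_one, neg_smul]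

lemma Bpoly_modG (n k q : ℕ) (G : Fin k → Fin n × Fin n) (S : Finset (Fin k)) :
    Bpoly n k q (modG G S) =
      ∑ f : Fin n → Fin q,
        (X 0 : MvPolynomial (Fin 2) ℚ) ^
            (univ.filter fun i => i ∉ S ∧ f (G i).1 < f (G i).2).card *
        X 1 ^ (univ.filter fun i => i ∉ S ∧ f (G i).2 < f (G i).1).card := by
  unfold Bpoly
  apply Finset.sum_congr rfl
  intro f _
  congr 2
  · apply congrArg
    ext i
    by_cases hiS : i ∈ S <;> simp only [Finset.mem_filter, Finset.mem_univ, true_and] <;> simp [modG, hiS]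
  · apply congrArg
    ext i
    by_cases hiS : i ∈ S <;> simp only [Finset.mem_filter, Finset.mem_univ, true_and] <;> simp [modG, hiS]

lemma prod_t (n k q : ℕ) (G : Fin k → Fin n × Fin n) (f : Fin n → Fin q)
    (T : Finset (Fin k)) :
    (∏ i ∈ T, (if f (G i).1 < f (G i).2 then (X 0 : MvPolynomial (Fin 2) ℚ)
        else if f (G i).2 < f (G i).1 then X 1 else 1)) =
      X 0 ^ (T.filter fun i => f (G i).1 < f (G i).2).card *
      X 1 ^ (T.filter fun i => f (G i).2 < f (G i).1).card := by
  induction T using Finset.induction_on with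
  | empty => simp
  | @insert a T ha ih =>
    rw [Finset.prod_insert ha, ih, Finset.filter_insert, Finset.filter_insert]
    by_cases h1 : f (G a).1 < f (G a).2
    · have h2 : ¬ f (G a).2 < f (G a).1 := asymm h1
      rw [if_pos h1, if_pos h1, if_neg h2,
        Finset.card_insert_of_notMem (by simp [ha])]
      ring
    · by_cases h2 : f (G a).2 < f (G a).1
      · rw [if_neg h1, if_pos h2, if_neg h1, if_pos h2,
          Finset.card_insert_of_notMem (by simp [ha])]
        ring
      · rw [if_neg h1, if_neg h2, if_neg h1, if_neg h2, one_mul]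

lemma sum_S (n k q : ℕ) (G : Fin k → Fin n × Fin n) (f : Fin n → Fin q) :
    ∑ S ∈ (univ : Finset (Fin k)).powerset, (-1 : ℤ) ^ S.card •
      ((X 0 : MvPolynomial (Fin 2) ℚ) ^
          (univ.filter fun i => i ∉ S ∧ f (G i).1 < f (G i).2).card *
        X 1 ^ (univ.filter fun i => i ∉ S ∧ f (G i).2 < f (G i).1).card) =
    ∏ i : Fin k,
      ((if f (G i).1 < f (G i).2 then (X 0 : MvPolynomial (Fin 2) ℚ)
        else if f (G i).2 < f (G i).1 then X 1 else 1) - 1) := by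
  have h := Finset.prod_add (fun _ => (-1 : MvPolynomial (Fin 2) ℚ))
      (fun i => if f (G i).1 < f (G i).2 then X 0
        else if f (G i).2 < f (G i).1 then X 1 else 1)
      (univ : Finset (Fin k))
  rw [Finset.prod_congr rfl
    (fun i (_ : i ∈ (univ : Finset (Fin k))) => (sub_eq_neg_add
      (if f (G i).1 < f (G i).2 then (X 0 : MvPolynomial (Fin 2) ℚ)
        else if f (G i).2 < f (G i).1 then X 1 else 1) 1))]
  rw [h]
  apply Finset.sum_congr rfl
  intro S _
  rw [Finset.prod_const, prod_t n k q G f (univ \ S)]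
  have e1 : ((univ \ S).filter fun i => f (G i).1 < f (G i).2)
      = (univ.filter fun i => i ∉ S ∧ f (G i).1 < f (G i).2) := by
    ext i; simp [Finset.mem_sdiff]
  have e2 : ((univ \ S).filter fun i => f (G i).2 < f (G i).1)
      = (univ.filter fun i => i ∉ S ∧ f (G i).2 < f (G i).1) := by
    ext i; simp [Finset.mem_sdiff]
  rw [e1, e2, zsmul_eq_mul]
  push_cast
  ring

lemma prod_cases (n k q : ℕ) (G : Fin k → Fin n × Fin n) (f : Fin n → Fin q) :
    (∏ i : Fin k,
      ((if f (G i).1 < f (G i).2 then (X 0 : MvPolynomial (Fin 2) ℚ)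
        else if f (G i).2 < f (G i).1 then X 1 else 1) - 1)) =
      if ∀ i, f (G i).1 ≠ f (G i).2 then
        (X 0 - 1) ^ (univ.filter fun i => f (G i).1 < f (G i).2).card *
        (X 1 - 1) ^ (univ.filter fun i => f (G i).2 < f (G i).1).card
      else 0 := by
  by_cases hE : ∀ i, f (G i).1 ≠ f (G i).2
  · rw [if_pos hE]
    rw [← Finset.prod_filter_mul_prod_filter_not univ (fun i => f (G i).1 < f (G i).2)]
    congr 1
    · rw [Finset.prod_congr rfl (fun i hi =>
        by rw [if_pos (Finset.mem_filter.mp hi).2]), Finset.prod_const]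
    · have hfe : univ.filter (fun i => ¬ f (G i).1 < f (G i).2)
          = univ.filter (fun i => f (G i).2 < f (G i).1) := by
        ext i
        simp only [Finset.mem_filter, Finset.mem_univ, true_and]
        constructor
        · intro h
          rcases lt_or_gt_of_ne (hE i) with h' | h'
          · exact absurd h' h
          · exact h'
        · intro h; exact asymm h
      rw [hfe]
      rw [Finset.prod_congr rfl (fun i hi => ?_), Finset.prod_const]
      have hd := (Finset.mem_filter.mp hi).2
      rw [if_neg (asymm hd), if_pos hd]
  · rw [if_neg hE]
    push_neg at hE
    obtain ⟨i, hi⟩ := hE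
    apply Finset.prod_eq_zero (Finset.mem_univ i)
    rw [if_neg (by rw [hi]; exact lt_irrefl _), if_neg (by rw [hi]; exact lt_irrefl _),
      sub_self]

lemma deg_eq (n k q : ℕ) (G : Fin k → Fin n × Fin n) (f : Fin n → Fin q) :
    (∀ i, f (G i).1 ≠ f (G i).2) ↔
      (univ.filter fun i => f (G i).1 < f (G i).2).card +
      (univ.filter fun i => f (G i).2 < f (G i).1).card = k := by
  have hdisj : Disjoint (univ.filter fun i => f (G i).1 < f (G i).2)
      (univ.filter fun i => f (G i).2 < f (G i).1) := by
    rw [Finset.disjoint_left]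
    intro i h1 h2
    exact absurd (Finset.mem_filter.mp h2).2 (asymm (Finset.mem_filter.mp h1).2)
  rw [← Finset.card_union_of_disjoint hdisj, ← Finset.filter_or]
  constructor
  · intro hE
    rw [Finset.filter_true_of_mem (fun i _ => lt_or_gt_of_ne (hE i))]
    simp
  · intro hc i
    have huniv : univ.filter
        (fun i => f (G i).1 < f (G i).2 ∨ f (G i).2 < f (G i).1) = univ := by
      apply Finset.eq_univ_of_card
      rw [hc]
      simp
    have hmem : i ∈ univ.filter
        (fun i => f (G i).1 < f (G i).2 ∨ f (G i).2 < f (G i).1) := by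
      rw [huniv]; exact Finset.mem_univ i
    rcases (Finset.mem_filter.mp hmem).2 with h | h
    · exact ne_of_lt h
    · exact ne_of_gt h

lemma coeff_trunc (m : ℕ) (P : MvPolynomial (Fin 2) ℚ) (d : Fin 2 →₀ ℕ) :
    (trunc m P).coeff d = if d 0 + d 1 = m then P.coeff d else 0 := by
  unfold trunc
  rw [MvPolynomial.coeff_sum]
  simp only [MvPolynomial.coeff_monomial]
  rw [Finset.sum_ite_eq' (P.support.filter fun d => d 0 + d 1 = m) d (fun d' => P.coeff d')]
  by_cases h1 : d 0 + d 1 = m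
  · by_cases h2 : P.coeff d = 0
    · simp [h1, h2]
    · simp [h1, h2, MvPolynomial.mem_support_iff]
  · simp [h1]

/-- The exponent `y^a z^b` as a finsupp. -/
noncomputable def mexp (a b : ℕ) : Fin 2 →₀ ℕ := Finsupp.single 0 a + Finsupp.single 1 b

lemma mexp_zero (a b : ℕ) : mexp a b 0 = a := by
  simp [mexp, Finsupp.single_apply]

lemma mexp_one (a b : ℕ) : mexp a b 1 = b := by
  simp [mexp, Finsupp.single_apply]

lemma Xpow_eq (a b : ℕ) :
    (X 0 : MvPolynomial (Fin 2) ℚ) ^ a * X 1 ^ b = monomial (mexp a b) 1 := by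
  rw [X_pow_eq_monomial, X_pow_eq_monomial, monomial_mul, one_mul]
  rfl

lemma trunc_Bpoly (n k q : ℕ) (G : Fin k → Fin n × Fin n) :
    trunc k (Bpoly n k q G) =
      ∑ f ∈ (univ : Finset (Fin n → Fin q)).filter
          (fun f => (univ.filter fun i => f (G i).1 < f (G i).2).card +
                    (univ.filter fun i => f (G i).2 < f (G i).1).card = k),
        (X 0 : MvPolynomial (Fin 2) ℚ) ^ (univ.filter fun i => f (G i).1 < f (G i).2).card *
        X 1 ^ (univ.filter fun i => f (G i).2 < f (G i).1).card := by
  apply MvPolynomial.ext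
  intro d
  rw [coeff_trunc, MvPolynomial.coeff_sum]
  simp only [Xpow_eq, MvPolynomial.coeff_monomial]
  rw [Finset.sum_filter]
  have hBc : MvPolynomial.coeff d (Bpoly n k q G) =
      ∑ f : Fin n → Fin q,
        if mexp (univ.filter fun i => f (G i).1 < f (G i).2).card
            (univ.filter fun i => f (G i).2 < f (G i).1).card = d then (1 : ℚ) else 0 := by
    unfold Bpoly
    rw [MvPolynomial.coeff_sum]
    simp only [Xpow_eq, MvPolynomial.coeff_monomial]
  by_cases hd : d 0 + d 1 = k
  · rw [if_pos hd, hBc]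
    apply Finset.sum_congr rfl
    intro f _
    by_cases hm : mexp (univ.filter fun i => f (G i).1 < f (G i).2).card
        (univ.filter fun i => f (G i).2 < f (G i).1).card = d
    · have e0 : d 0 = (univ.filter fun i => f (G i).1 < f (G i).2).card := by
        rw [← hm, mexp_zero]
      have e1 : d 1 = (univ.filter fun i => f (G i).2 < f (G i).1).card := by
        rw [← hm, mexp_one]
      have hk : (univ.filter fun i => f (G i).1 < f (G i).2).card +
          (univ.filter fun i => f (G i).2 < f (G i).1).card = k := by
        rw [← e0, ← e1]; exact hd
      simp [hm, hk]
    · simp [hm]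
  · rw [if_neg hd]
    symm
    apply Finset.sum_eq_zero
    intro f _
    by_cases hk : (univ.filter fun i => f (G i).1 < f (G i).2).card +
        (univ.filter fun i => f (G i).2 < f (G i).1).card = k
    · rw [if_pos hk, if_neg]
      intro hm
      apply hd
      have e0 : d 0 = (univ.filter fun i => f (G i).1 < f (G i).2).card := by
        rw [← hm, mexp_zero]
      have e1 : d 1 = (univ.filter fun i => f (G i).2 < f (G i).1).card := by
        rw [← hm, mexp_one]
      rw [e0, e1]
      exact hk
    · rw [if_neg hk]

end Stmt9Aux

open Stmt9Aux MvPolynomial in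
/-- Main theorem (directed case): for loopless `G`, the coefficient of `G` in
`Δ 𝓑_{n,k}(q,y,z)` equals `[B_G]_k(q, y-1, z-1)`. -/
theorem stmt9 (n k q : ℕ) (hq : 0 < q) (G : Fin k → Fin n × Fin n)
    (hG : ∀ i, (G i).1 ≠ (G i).2) :
    Delta n k (fun H => Bpoly n k q H) G =
      (MvPolynomial.bind₁ fun j : Fin 2 => MvPolynomial.X j - 1)
        (trunc k (Bpoly n k q G)) := by
  classical
  have hD : Delta n k (fun H => Bpoly n k q H) G =
      ∑ S ∈ (univ : Finset (Fin k)).powerset,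
        (-1 : ℤ) ^ S.card • Bpoly n k q (modG G S) := by
    have h := foldr_expand n k (fun H => Bpoly n k q H) (List.finRange k)
      (List.nodup_finRange k) G (fun i _ => hG i)
    simpa [Delta, List.toFinset_finRange] using h
  rw [hD]
  rw [Finset.sum_congr rfl (fun S (_ : S ∈ (univ : Finset (Fin k)).powerset) => by
    rw [Bpoly_modG n k q G S, Finset.smul_sum])]
  rw [Finset.sum_comm]
  rw [Finset.sum_congr rfl (fun f (_ : f ∈ (univ : Finset (Fin n → Fin q))) =>
    sum_S n k q G f)]
  rw [Finset.sum_congr rfl (fun f (_ : f ∈ (univ : Finset (Fin n → Fin q))) =>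
    prod_cases n k q G f)]
  rw [Finset.sum_congr rfl (fun f (_ : f ∈ (univ : Finset (Fin n → Fin q))) =>
    if_congr (deg_eq n k q G f) rfl rfl)]
  rw [← Finset.sum_filter]
  rw [trunc_Bpoly, map_sum]
  simp only [map_mul, map_pow, MvPolynomial.bind₁_X_right]
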